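/- arXiv:1111.4989 — 5 statements merged into one kernel-verified Lean document; each statement's English description precedes it below -/
import Mathlib

section
/- Let T_x be a rooted tree with root x, and partition the children of x into classes C_1, …, C_t where two children u, v lie in the same class iff T_u and T_v are isomorphic as rooted trees; select a representative u_j of each class C_j. Then the number D(T_x; k) of equivalence classes of distinguishing k-colorings of T_x equals k · ∏_{j=1}^{t} binom(D(T_{u_j}; k), |C_j|). -/
open SimpleGraph

noncomputable section

def ecc {V : Type*} [Fintype V] (G : SimpleGraph V) (v : V) : ℕ :=
  Finset.univ.sup fun u => G.dist u v

def graphCenter {V : Type*} [Fintype V] (G : SimpleGraph V) : Set V :=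
  {v | ∀ u, ecc G v ≤ ecc G u}

def desc {V : Type*} (G : SimpleGraph V) (x v : V) : Set V :=
  {u | G.dist u x = G.dist u v + G.dist v x}

lemma self_mem_desc {V : Type*} (G : SimpleGraph V) (x v : V) : v ∈ desc G x v := by
  simp [desc]

def Distinguishes {V α : Type*} (G : SimpleGraph V) (r : V) (φ : V → α) : Prop :=
  ∀ σ : G ≃g G, σ r = r → (∀ w, φ (σ w) = φ w) → ∀ w, σ w = w

def DistinguishesU {V α : Type*} (G : SimpleGraph V) (φ : V → α) : Prop :=
  ∀ σ : G ≃g G, (∀ w, φ (σ w) = φ w) → ∀ w, σ w = w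

def RootedIso {V W : Type*} (G : SimpleGraph V) (H : SimpleGraph W) (r : V) (s : W) : Prop :=
  ∃ π : G ≃g H, π r = s

def ColEquiv {V W α : Type*} (G : SimpleGraph V) (H : SimpleGraph W) (r : V) (s : W)
    (φ : V → α) (ψ : W → α) : Prop :=
  ∃ π : G ≃g H, π r = s ∧ ∀ w, φ w = ψ (π w)

def IsProper {V α : Type*} (G : SimpleGraph V) (φ : V → α) : Prop :=
  ∀ a b, G.Adj a b → φ a ≠ φ b

def DCount {V : Type*} (G : SimpleGraph V) (r : V) (k : ℕ) : ℕ :=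
  Nat.card (Quot fun φ ψ : {f : V → Fin k // Distinguishes G r f} =>
    ∃ σ : G ≃g G, σ r = r ∧ ∀ w, φ.1 w = ψ.1 (σ w))

def DCountL {V : Type*} (G : SimpleGraph V) (r : V) (L : V → Finset ℕ) : ℕ :=
  Nat.card (Quot fun φ ψ : {f : V → ℕ // (∀ v, f v ∈ L v) ∧ Distinguishes G r f} =>
    ∃ σ : G ≃g G, σ r = r ∧ ∀ w, φ.1 w = ψ.1 (σ w))

def DChiCount {V : Type*} (G : SimpleGraph V) (r : V) (k : ℕ) : ℕ :=
  Nat.card (Quot fun φ ψ : {f : V → Fin k // IsProper G f ∧ Distinguishes G r f} =>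
    ∃ σ : G ≃g G, σ r = r ∧ ∀ w, φ.1 w = ψ.1 (σ w))

def DChiCountI {V : Type*} (G : SimpleGraph V) (r : V) (k : ℕ) (i : Fin k) : ℕ :=
  Nat.card (Quot fun φ ψ : {f : V → Fin k // IsProper G f ∧ Distinguishes G r f ∧ f r = i} =>
    ∃ σ : G ≃g G, σ r = r ∧ ∀ w, φ.1 w = ψ.1 (σ w))

def DChiCountLI {V : Type*} (G : SimpleGraph V) (r : V) (L : V → Finset ℕ) (i : ℕ) : ℕ :=
  Nat.card (Quot fun φ ψ : {f : V → ℕ // (∀ v, f v ∈ L v) ∧ IsProper G f ∧ Distinguishes G r f ∧ f r = i} =>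
    ∃ σ : G ≃g G, σ r = r ∧ ∀ w, φ.1 w = ψ.1 (σ w))

def DNum {V : Type*} (G : SimpleGraph V) (r : V) : ℕ :=
  sInf {k | ∃ φ : V → Fin k, Distinguishes G r φ}

def DListNum {V : Type*} (G : SimpleGraph V) (r : V) : ℕ :=
  sInf {k | ∀ L : V → Finset ℕ, (∀ v, (L v).card = k) →
    ∃ φ : V → ℕ, (∀ v, φ v ∈ L v) ∧ Distinguishes G r φ}

def DNumU {V : Type*} (G : SimpleGraph V) : ℕ :=
  sInf {k | ∃ φ : V → Fin k, DistinguishesU G φ}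

def DListNumU {V : Type*} (G : SimpleGraph V) : ℕ :=
  sInf {k | ∀ L : V → Finset ℕ, (∀ v, (L v).card = k) →
    ∃ φ : V → ℕ, (∀ v, φ v ∈ L v) ∧ DistinguishesU G φ}

def chiD {V : Type*} (G : SimpleGraph V) (r : V) : ℕ :=
  sInf {k | ∃ φ : V → Fin k, IsProper G φ ∧ Distinguishes G r φ}

def chiDL {V : Type*} (G : SimpleGraph V) (r : V) : ℕ :=
  sInf {k | ∀ L : V → Finset ℕ, (∀ v, (L v).card = k) →
    ∃ φ : V → ℕ, (∀ v, φ v ∈ L v) ∧ IsProper G φ ∧ Distinguishes G r φ}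

def chiDU {V : Type*} (G : SimpleGraph V) : ℕ :=
  sInf {k | ∃ φ : V → Fin k, IsProper G φ ∧ DistinguishesU G φ}

def chiDLU {V : Type*} (G : SimpleGraph V) : ℕ :=
  sInf {k | ∀ L : V → Finset ℕ, (∀ v, (L v).card = k) →
    ∃ φ : V → ℕ, (∀ v, φ v ∈ L v) ∧ IsProper G φ ∧ DistinguishesU G φ}

def subdiv {V : Type*} (G : SimpleGraph V) (u v : V) : SimpleGraph (V ⊕ Unit) :=
  SimpleGraph.fromRel fun a b =>
    match a, b with
    | Sum.inl a, Sum.inl b => G.Adj a b ∧ ¬(a = u ∧ b = v) ∧ ¬(a = v ∧ b = u)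
    | Sum.inl a, Sum.inr _ => a = u ∨ a = v
    | Sum.inr _, _ => False

def childOf {V : Type*} (G : SimpleGraph V) (r v u : V) : Prop :=
  G.Adj v u ∧ G.dist u r = G.dist v r + 1

/-!
A root-fixing automorphism of a rooted tree permutes the children of the root and maps each
branch `T_v` isomorphically onto `T_{σ v}`; conversely, a family of rooted isomorphisms between
branches that permutes the children glues to such an automorphism. Consequently a colouring is
distinguishing iff its restriction to every branch is distinguishing and no two sibling branches
carry equivalent colourings, and two distinguishing colourings are equivalent iff they agree at
the root and induce the same set of branch classes. Reading every branch of the class `C_j` on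
the representative `T_{u_j}`, a distinguishing colouring up to equivalence is therefore a colour
for the root together with, for each `j`, a `|C_j|`-element set of classes of distinguishing
colourings of `T_{u_j}`.
-/

theorem Nat.card_subtype_finset_card_eq (α : Type*) [Finite α] (n : ℕ) :
    Nat.card {s : Finset α // s.card = n} = (Nat.card α).choose n := by
  have := Fintype.ofFinite α
  rw [Nat.card_eq_fintype_card, Fintype.card_finset_len, Nat.card_eq_fintype_card]

theorem SimpleGraph.Hom.dist_map_le {V W : Type*} {G : SimpleGraph V} {H : SimpleGraph W}
    (f : G →g H) {a b : V} (h : G.Reachable a b) : H.dist (f a) (f b) ≤ G.dist a b := by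
  obtain ⟨p, hp⟩ := h.exists_walk_length_eq_dist
  simpa [hp] using dist_le (p.map f)

theorem SimpleGraph.Iso.dist_apply {V W : Type*} {G : SimpleGraph V} {H : SimpleGraph W}
    (f : G ≃g H) (a b : V) : H.dist (f a) (f b) = G.dist a b := by
  by_cases h : G.Reachable a b
  · refine le_antisymm (f.toHom.dist_map_le h) ?_
    simpa using f.symm.toHom.dist_map_le (a := f a) (b := f b) (Iso.reachable_iff.mpr h)
  · rw [dist_eq_zero_of_not_reachable h,
      dist_eq_zero_of_not_reachable (Iso.reachable_iff.not.mpr h)]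

theorem SimpleGraph.Walk.IsPath.length_eq_dist {V : Type*} {G : SimpleGraph V} (hG : G.IsAcyclic)
    {a b : V} {p : G.Walk a b} (hp : p.IsPath) : p.length = G.dist a b := by
  obtain ⟨q, hq, hql⟩ := p.reachable.exists_path_of_dist
  rw [← hql, Subtype.mk.inj ((hG.subsingleton_path a b).elim ⟨p, hp⟩ ⟨q, hq⟩)]

section ColEquiv

variable {U V W α : Type*} {G : SimpleGraph U} {H : SimpleGraph V} {K : SimpleGraph W}
  {r : U} {s : V} {t : W} {φ : U → α} {ψ : V → α} {χ : W → α}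

theorem ColEquiv.refl (G : SimpleGraph U) (r : U) (φ : U → α) : ColEquiv G G r r φ φ :=
  ⟨.refl, rfl, fun _ => rfl⟩

theorem ColEquiv.symm (h : ColEquiv G H r s φ ψ) : ColEquiv H G s r ψ φ := by
  obtain ⟨π, hπ, hφ⟩ := h
  exact ⟨π.symm, π.symm_apply_eq.mpr hπ.symm, fun a => by simpa using (hφ (π.symm a)).symm⟩

theorem ColEquiv.trans (h₁ : ColEquiv G H r s φ ψ) (h₂ : ColEquiv H K s t ψ χ) :
    ColEquiv G K r t φ χ := by
  obtain ⟨π₁, hπ₁, hφ⟩ := h₁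
  obtain ⟨π₂, hπ₂, hψ⟩ := h₂
  exact ⟨π₁.trans π₂, by simp [hπ₁, hπ₂], fun a => (hφ a).trans (hψ (π₁ a))⟩

theorem ColEquiv.of_iso (π : G ≃g H) (hπ : π r = s) (ψ : V → α) :
    ColEquiv G H r s (ψ ∘ π) ψ :=
  ⟨π, hπ, fun _ => rfl⟩

theorem colEquiv_comp_iso_iff {U' V' : Type*} {G' : SimpleGraph U'} {H' : SimpleGraph V'}
    {r' : U'} {s' : V'} (π : G' ≃g G) (hπ : π r' = r) (π' : H' ≃g H) (hπ' : π' s' = s) :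
    ColEquiv G' H' r' s' (φ ∘ π) (ψ ∘ π') ↔ ColEquiv G H r s φ ψ :=
  ⟨fun h => ((ColEquiv.of_iso π hπ φ).symm.trans h).trans (.of_iso π' hπ' ψ),
    fun h => ((ColEquiv.of_iso π hπ φ).trans h).trans (ColEquiv.of_iso π' hπ' ψ).symm⟩

theorem Distinguishes.of_colEquiv (h : ColEquiv G H r s φ ψ) (hψ : Distinguishes H s ψ) :
    Distinguishes G r φ := by
  obtain ⟨π, hπ, hφ⟩ := h
  intro τ hτ hτφ a
  have hfix := hψ ((π.symm.trans τ).trans π) (by simp [← hπ, hτ]) fun b => by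
    simpa [hφ] using hτφ (π.symm b)
  simpa using hfix (π a)

theorem ColEquiv.rootedIso (h : ColEquiv G H r s φ ψ) : RootedIso G H r s :=
  let ⟨π, hπ, _⟩ := h; ⟨π, hπ⟩

end ColEquiv

abbrev DistClasses {W : Type*} (H : SimpleGraph W) (r : W) (k : ℕ) :=
  Quot fun φ ψ : {f : W → Fin k // Distinguishes H r f} => ColEquiv H H r r φ.1 ψ.1

theorem dCount_eq_card {W : Type*} (H : SimpleGraph W) (r : W) (k : ℕ) :
    DCount H r k = Nat.card (DistClasses H r k) := rfl

theorem DistClasses.mk_eq_mk_iff {W : Type*} {H : SimpleGraph W} {r : W} {k : ℕ}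
    {φ ψ : {f : W → Fin k // Distinguishes H r f}} :
    (Quot.mk _ φ : DistClasses H r k) = Quot.mk _ ψ ↔ ColEquiv H H r r φ.1 ψ.1 :=
  Quot.eq.trans (Equivalence.eqvGen_iff
    ⟨fun φ => .refl H r φ.1, ColEquiv.symm, ColEquiv.trans⟩)

section RootedTree

variable {V : Type*} {G : SimpleGraph V} {x : V}

local notation "T[" v "]" => G.induce (desc G x v)
local notation "r[" v "]" => Subtype.mk (p := (· ∈ desc G x v)) v (self_mem_desc G x v)

theorem notMem_desc_of_adj {v : V} (hxv : G.Adj x v) : x ∉ desc G x v := by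
  simp [desc, dist_eq_one_iff_adj.mpr hxv.symm]

theorem ne_of_mem_desc {v a : V} (hxv : G.Adj x v) (ha : a ∈ desc G x v) : a ≠ x := by
  rintro rfl
  exact notMem_desc_of_adj hxv ha

theorem apply_mem_desc_apply_iff (σ : G ≃g G) (hσ : σ x = x) (a v : V) :
    σ a ∈ desc G x (σ v) ↔ a ∈ desc G x v := by
  conv_lhs => rw [← hσ]
  simp only [desc, Set.mem_ofPred_eq, Iso.dist_apply]

theorem mem_desc_iff_mem_support (hG : G.IsTree) {a v : V} {p : G.Walk a x} (hp : p.IsPath) :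
    a ∈ desc G x v ↔ v ∈ p.support := by
  classical
  constructor
  · intro h
    obtain ⟨q₁, -, hq₁⟩ := hG.connected.exists_path_of_dist a v
    obtain ⟨q₂, -, hq₂⟩ := hG.connected.exists_path_of_dist v x
    have hq : (q₁.append q₂).IsPath := Walk.isPath_of_length_eq_dist _ <| by
      rw [Walk.length_append, hq₁, hq₂]
      exact h.symm
    rw [Subtype.mk.inj ((hG.isAcyclic.subsingleton_path a x).elim ⟨p, hp⟩ ⟨_, hq⟩),
      Walk.support_append]
    exact List.mem_append_left _ q₁.end_mem_support
  · intro h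
    have hlen := congrArg Walk.length (p.take_spec h)
    rw [Walk.length_append, (hp.takeUntil h).length_eq_dist hG.isAcyclic,
      (hp.dropUntil h).length_eq_dist hG.isAcyclic, hp.length_eq_dist hG.isAcyclic] at hlen
    exact hlen.symm

/-- The child of `x` whose subtree contains `a`; junk value `x` when `a = x`. -/
def branch (hG : G.IsTree) (x a : V) : V :=
  (hG.existsUnique_path a x).choose.penultimate

theorem branch_eq_penultimate (hG : G.IsTree) {a : V} {p : G.Walk a x} (hp : p.IsPath) :
    branch hG x a = p.penultimate := by
  rw [branch, (hG.existsUnique_path a x).unique (hG.existsUnique_path a x).choose_spec.1 hp]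

theorem exists_isPath_penultimate_eq_branch (hG : G.IsTree) (a : V) :
    ∃ p : G.Walk a x, p.IsPath ∧ p.penultimate = branch hG x a :=
  ⟨_, (hG.existsUnique_path a x).choose_spec.1, rfl⟩

theorem adj_branch (hG : G.IsTree) {a : V} (ha : a ≠ x) : G.Adj x (branch hG x a) := by
  obtain ⟨p, -, hp⟩ := exists_isPath_penultimate_eq_branch hG (x := x) a
  exact hp ▸ (p.adj_penultimate (Walk.not_nil_of_ne ha)).symm

theorem mem_desc_branch (hG : G.IsTree) (a : V) : a ∈ desc G x (branch hG x a) := by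
  obtain ⟨p, hpath, hp⟩ := exists_isPath_penultimate_eq_branch hG (x := x) a
  rw [mem_desc_iff_mem_support hG hpath, ← hp]
  exact p.getVert_mem_support _

theorem branch_eq_of_mem_desc (hG : G.IsTree) {a v : V} (hxv : G.Adj x v)
    (ha : a ∈ desc G x v) : branch hG x a = v := by
  obtain ⟨p, hpath, hp⟩ := exists_isPath_penultimate_eq_branch hG (x := x) a
  rw [← hp]
  exact (hG.isAcyclic.eq_penultimate_of_adj_end hpath hxv
    ((mem_desc_iff_mem_support hG hpath).mp ha)).symm

theorem branch_eq_of_adj_of_notMem_desc (hG : G.IsTree) {a c : V} (hac : G.Adj a c)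
    (hc : c ≠ x) (h : c ∉ desc G x a) : branch hG x a = branch hG x c := by
  obtain ⟨p, hpath, hp⟩ := exists_isPath_penultimate_eq_branch hG (x := x) c
  have ha : a ∉ p.support := (mem_desc_iff_mem_support hG hpath).not.mp h
  rw [branch_eq_penultimate hG (hpath.cons ha (h := hac)),
    Walk.penultimate_cons_of_not_nil _ _ (Walk.not_nil_of_ne hc), hp]

theorem branch_eq_of_adj (hG : G.IsTree) {a c : V} (hac : G.Adj a c) (ha : a ≠ x)
    (hc : c ≠ x) : branch hG x a = branch hG x c := by
  by_cases h : c ∈ desc G x a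
  · refine (branch_eq_of_adj_of_notMem_desc hG hac.symm ha fun h' => ?_).symm
    simp only [desc, Set.mem_ofPred_eq, dist_eq_one_iff_adj.mpr hac,
      dist_eq_one_iff_adj.mpr hac.symm] at h h'
    omega
  · exact branch_eq_of_adj_of_notMem_desc hG hac hc h

theorem exists_extend_branches (hG : G.IsTree) {α : Type*} (c : α)
    (g : ∀ v, G.Adj x v → desc G x v → α) :
    ∃ F : V → α, F x = c ∧ ∀ v (hv : G.Adj x v) (a : desc G x v), F a = g v hv a := by
  classical
  refine ⟨fun a => if ha : a = x then c else g _ (adj_branch hG ha) ⟨a, mem_desc_branch hG a⟩,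
    dif_pos rfl, ?_⟩
  rintro v hv ⟨a, ha⟩
  obtain rfl := branch_eq_of_mem_desc hG hv ha
  exact dif_neg (ne_of_mem_desc hv ha)

theorem branch_apply_of_branches (hG : G.IsTree) {F : V → V}
    (hbr : ∀ v, G.Adj x v → G.Adj x (F v) ∧ ∃ E : T[v] ≃g T[F v], ∀ a, (E a : V) = F a)
    {a : V} (ha : a ≠ x) : F a ≠ x ∧ branch hG x (F a) = F (branch hG x a) := by
  obtain ⟨hchild, E, hE⟩ := hbr _ (adj_branch hG ha)
  have hmem : F a ∈ desc G x (F (branch hG x a)) := hE ⟨a, mem_desc_branch hG a⟩ ▸ (E _).2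
  exact ⟨ne_of_mem_desc hchild hmem, branch_eq_of_mem_desc hG hchild hmem⟩

theorem exists_iso_eq_of_branches (hG : G.IsTree) [Finite V] {F : V → V} (hFx : F x = x)
    (hinj : Set.InjOn F {v | G.Adj x v})
    (hsub : ∀ v, G.Adj x v →
      ∃ w, G.Adj x w ∧ F v = w ∧ ∃ E : T[v] ≃g T[w], ∀ a, (E a : V) = F a) :
    ∃ σ : G ≃g G, ⇑σ = F := by
  have hbr : ∀ v, G.Adj x v →
      G.Adj x (F v) ∧ ∃ E : T[v] ≃g T[F v], ∀ a, (E a : V) = F a := by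
    intro v hv
    obtain ⟨w, hw, rfl, E, hE⟩ := hsub v hv
    exact ⟨hw, E, hE⟩
  have hne {a : V} (ha : a ≠ x) := (branch_apply_of_branches hG hbr ha).1
  have hbranch {a : V} (ha : a ≠ x) := (branch_apply_of_branches hG hbr ha).2
  have hwithin {a c : V} (ha : a ≠ x) (hac : branch hG x a = branch hG x c) :
      (G.Adj (F a) (F c) ↔ G.Adj a c) ∧ (F a = F c → a = c) := by
    obtain ⟨-, E, hE⟩ := hbr _ (adj_branch hG ha)
    have hc : c ∈ desc G x (branch hG x a) := hac ▸ mem_desc_branch hG c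
    rw [← hE ⟨a, mem_desc_branch hG a⟩, ← hE ⟨c, hc⟩]
    exact ⟨E.map_adj_iff, fun h => congrArg Subtype.val (E.injective (Subtype.ext h))⟩
  have hbranch_inj {a c : V} (ha : a ≠ x) (hc : c ≠ x)
      (h : branch hG x (F a) = branch hG x (F c)) : branch hG x a = branch hG x c := by
    rw [hbranch ha, hbranch hc] at h
    exact hinj (adj_branch hG ha) (adj_branch hG hc) h
  have hF_inj : Function.Injective F := by
    intro a c h
    by_cases ha : a = x <;> by_cases hc : c = x
    · rw [ha, hc]
    · exact absurd (h.symm.trans (ha ▸ hFx)) (hne hc)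
    · exact absurd (h.trans (hc ▸ hFx)) (hne ha)
    · exact (hwithin ha (hbranch_inj ha hc (congrArg _ h))).2 h
  have hroot (c : V) : G.Adj x (F c) ↔ G.Adj x c := by
    refine ⟨fun h => ?_, fun h => (hbr c h).1⟩
    have hc : c ≠ x := by rintro rfl; exact G.irrefl (hFx ▸ h)
    have : F c = F (branch hG x c) := by
      rw [← hbranch hc, branch_eq_of_mem_desc hG h (self_mem_desc G x _)]
    exact hF_inj this ▸ adj_branch hG hc
  have hadj (a c : V) : G.Adj (F a) (F c) ↔ G.Adj a c := by
    by_cases ha : a = x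
    · rw [ha, hFx]; exact hroot c
    by_cases hc : c = x
    · rw [hc, hFx, G.adj_comm, G.adj_comm a]; exact hroot a
    refine ⟨fun h => ?_, fun h => (hwithin ha (branch_eq_of_adj hG h ha hc)).1.mpr h⟩
    exact (hwithin ha (hbranch_inj ha hc (branch_eq_of_adj hG h (hne ha) (hne hc)))).1.mp h
  exact ⟨⟨Equiv.ofBijective F (Finite.injective_iff_bijective.mp hF_inj), hadj _ _⟩, rfl⟩

theorem eq_of_mem_desc_of_mem_desc (hG : G.IsTree) {v w a : V} (hxv : G.Adj x v)
    (hxw : G.Adj x w) (hv : a ∈ desc G x v) (hw : a ∈ desc G x w) : v = w :=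
  (branch_eq_of_mem_desc hG hxv hv).symm.trans (branch_eq_of_mem_desc hG hxw hw)

theorem notMem_desc_of_mem_desc (hG : G.IsTree) {v w a : V} (hxv : G.Adj x v)
    (hxw : G.Adj x w) (hvw : v ≠ w) (ha : a ∈ desc G x v) : a ∉ desc G x w := fun h =>
  hvw (eq_of_mem_desc_of_mem_desc hG hxv hxw ha h)

theorem bijOn_desc (σ : G ≃g G) (hσ : σ x = x) (v : V) :
    Set.BijOn σ (desc G x v) (desc G x (σ v)) := by
  have : desc G x v = σ ⁻¹' desc G x (σ v) :=
    Set.ext fun a => (apply_mem_desc_apply_iff σ hσ a v).symm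
  rw [this]
  exact σ.bijective.bijOn_preimage

theorem exists_iso_extend_subtree (hG : G.IsTree) [Finite V] {v : V} (hxv : G.Adj x v)
    (τ : T[v] ≃g T[v]) (hτ : τ r[v] = r[v]) :
    ∃ σ : G ≃g G, σ x = x ∧ (∀ a : desc G x v, σ a = τ a) ∧
      ∀ a ∉ desc G x v, σ a = a := by
  classical
  set F : V → V := fun a => if h : a ∈ desc G x v then τ ⟨a, h⟩ else a with hF
  have hFv (a : desc G x v) : F a = τ a := dif_pos a.2
  have hFo {a : V} (ha : a ∉ desc G x v) : F a = a := dif_neg ha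
  have hFchild {z : V} (hz : G.Adj x z) : F z = z := by
    by_cases h : z ∈ desc G x v
    · obtain rfl := eq_of_mem_desc_of_mem_desc hG hz hxv (self_mem_desc G x z) h
      exact (hFv r[z]).trans (congrArg Subtype.val hτ)
    · exact hFo h
  obtain ⟨σ, hσ⟩ := exists_iso_eq_of_branches hG (hFo (notMem_desc_of_adj hxv))
    (fun z hz z' hz' h => by rwa [hFchild hz, hFchild hz'] at h) fun z hz => by
      by_cases h : z = v
      · subst h
        exact ⟨z, hz, hFchild hz, τ, fun a => (hFv a).symm⟩
      · exact ⟨z, hz, hFchild hz, .refl,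
          fun a => (hFo (notMem_desc_of_mem_desc hG hz hxv h a.2)).symm⟩
  exact ⟨σ, hσ ▸ hFo (notMem_desc_of_adj hxv), fun a => hσ ▸ hFv a,
    fun a ha => hσ ▸ hFo ha⟩

theorem exists_iso_swap_subtrees (hG : G.IsTree) [Finite V] {v w : V} (hxv : G.Adj x v)
    (hxw : G.Adj x w) (hvw : v ≠ w) (ρ : T[v] ≃g T[w]) (hρ : ρ r[v] = r[w]) :
    ∃ σ : G ≃g G, σ x = x ∧ (∀ a : desc G x v, σ a = ρ a) ∧
      (∀ a : desc G x w, σ a = ρ.symm a) ∧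
      ∀ a ∉ desc G x v, a ∉ desc G x w → σ a = a := by
  classical
  set F : V → V := fun a => if h : a ∈ desc G x v then ρ ⟨a, h⟩
    else if h' : a ∈ desc G x w then ρ.symm ⟨a, h'⟩ else a with hF
  have hFv (a : desc G x v) : F a = ρ a := dif_pos a.2
  have hFw (a : desc G x w) : F a = ρ.symm a :=
    (dif_neg (notMem_desc_of_mem_desc hG hxw hxv hvw.symm a.2)).trans (dif_pos a.2)
  have hFo {a : V} (hv : a ∉ desc G x v) (hw : a ∉ desc G x w) : F a = a :=
    (dif_neg hv).trans (dif_neg hw)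
  have hinv : Function.LeftInverse F F := by
    intro a
    by_cases hv : a ∈ desc G x v
    · rw [hFv ⟨a, hv⟩, hFw, ρ.symm_apply_apply]
    by_cases hw : a ∈ desc G x w
    · rw [hFw ⟨a, hw⟩, hFv, ρ.apply_symm_apply]
    · rw [hFo hv hw, hFo hv hw]
  have hρ' : ρ.symm r[w] = r[v] := ρ.symm_apply_eq.mpr hρ.symm
  have hxo : x ∉ desc G x v ∧ x ∉ desc G x w :=
    ⟨notMem_desc_of_adj hxv, notMem_desc_of_adj hxw⟩
  obtain ⟨σ, hσ⟩ := exists_iso_eq_of_branches hG (hFo hxo.1 hxo.2) hinv.injective.injOn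
    fun z hz => by
      by_cases hzv : z = v
      · subst hzv
        exact ⟨w, hxw, (hFv r[z]).trans (congrArg Subtype.val hρ), ρ, fun a => (hFv a).symm⟩
      by_cases hzw : z = w
      · subst hzw
        exact ⟨v, hxv, (hFw r[z]).trans (congrArg Subtype.val hρ'), ρ.symm,
          fun a => (hFw a).symm⟩
      have hout {a : V} (ha : a ∈ desc G x z) : a ∉ desc G x v ∧ a ∉ desc G x w :=
        ⟨notMem_desc_of_mem_desc hG hz hxv hzv ha, notMem_desc_of_mem_desc hG hz hxw hzw ha⟩
      exact ⟨z, hz, hFo (hout (self_mem_desc G x z)).1 (hout (self_mem_desc G x z)).2, .refl,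
        fun a => (hFo (hout a.2).1 (hout a.2).2).symm⟩
  exact ⟨σ, hσ ▸ hFo hxo.1 hxo.2, fun a => hσ ▸ hFv a, fun a => hσ ▸ hFw a,
    fun a hv hw => hσ ▸ hFo hv hw⟩

theorem distinguishes_iff_subtrees (hG : G.IsTree) [Finite V] {α : Type*} {φ : V → α} :
    Distinguishes G x φ ↔
      (∀ v, G.Adj x v → Distinguishes T[v] r[v] (φ ∘ (↑))) ∧
      ∀ v w, G.Adj x v → G.Adj x w →
        ColEquiv T[v] T[w] r[v] r[w] (φ ∘ (↑)) (φ ∘ (↑)) → v = w := by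
  refine ⟨fun h => ⟨fun v hv τ hτ hτφ a => ?_, fun v w hv hw ⟨ρ, hρ, hρφ⟩ => ?_⟩,
    fun h => ?_⟩
  · obtain ⟨σ, hσx, hστ, hσo⟩ := exists_iso_extend_subtree hG hv τ hτ
    refine Subtype.ext ((hστ a).symm.trans (h σ hσx (fun b => ?_) a))
    by_cases hb : b ∈ desc G x v
    · rw [hστ ⟨b, hb⟩]; exact hτφ ⟨b, hb⟩
    · rw [hσo b hb]
  · by_contra hvw
    obtain ⟨σ, hσx, hσv, hσw, hσo⟩ := exists_iso_swap_subtrees hG hv hw hvw ρ hρ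
    refine hvw (Eq.symm ?_)
    rw [← h σ hσx (fun b => ?_) v, hσv r[v], hρ]
    by_cases hbv : b ∈ desc G x v
    · rw [hσv ⟨b, hbv⟩]; exact (hρφ ⟨b, hbv⟩).symm
    by_cases hbw : b ∈ desc G x w
    · rw [hσw ⟨b, hbw⟩]; simpa using hρφ (ρ.symm ⟨b, hbw⟩)
    · rw [hσo b hbv hbw]
  · obtain ⟨hsub, hinj⟩ := h
    intro σ hσx hσφ
    have hfix {v : V} (hv : G.Adj x v) : σ v = v := by
      refine (hinj v (σ v) hv (hσx ▸ σ.map_adj_iff.mpr hv) ?_).symm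
      exact ⟨σ.induce (bijOn_desc σ hσx v), rfl, fun a => (hσφ a).symm⟩
    intro a
    by_cases ha : a = x
    · rw [ha, hσx]
    set v := branch hG x a
    have hv : G.Adj x v := adj_branch hG ha
    have hbij : Set.BijOn σ (desc G x v) (desc G x v) := by
      simpa only [hfix hv] using bijOn_desc σ hσx v
    have hτ := hsub v hv (σ.induce hbij) (Subtype.ext (hfix hv)) fun b => hσφ b
    exact congrArg Subtype.val (hτ ⟨a, mem_desc_branch hG a⟩)

theorem colEquiv_iff_subtrees (hG : G.IsTree) [Finite V] {α : Type*} {φ ψ : V → α}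
    (hφ : Distinguishes G x φ) :
    ColEquiv G G x x φ ψ ↔ φ x = ψ x ∧ ∀ v, G.Adj x v →
      ∃ w, G.Adj x w ∧ ColEquiv T[v] T[w] r[v] r[w] (φ ∘ (↑)) (ψ ∘ (↑)) := by
  constructor
  · rintro ⟨σ, hσx, hσ⟩
    refine ⟨(hσ x).trans (by rw [hσx]), fun v hv => ⟨σ v, hσx ▸ σ.map_adj_iff.mpr hv,
      σ.induce (bijOn_desc σ hσx v), rfl, fun a => hσ a⟩⟩
  · rintro ⟨hx, h⟩
    choose w hw hE using h
    choose E hEroot hEcol using hE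
    obtain ⟨F, hFx, hF⟩ := exists_extend_branches hG x fun v hv a => (E v hv a : V)
    have hFw {v : V} (hv : G.Adj x v) : F v = w v hv :=
      (hF v hv r[v]).trans (congrArg Subtype.val (hEroot v hv))
    have hinj : Set.InjOn F {v | G.Adj x v} := by
      intro v hv v' hv' hvv'
      have h₁ : ColEquiv T[v] T[w v hv] r[v] r[w v hv] (φ ∘ (↑)) (ψ ∘ (↑)) :=
        ⟨E v hv, hEroot v hv, hEcol v hv⟩
      have h₂ : ColEquiv T[v'] T[w v' hv'] r[v'] r[w v' hv'] (φ ∘ (↑)) (ψ ∘ (↑)) :=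
        ⟨E v' hv', hEroot v' hv', hEcol v' hv'⟩
      rw [← hFw hv', ← hvv', hFw hv] at h₂
      exact ((distinguishes_iff_subtrees hG).mp hφ).2 v v' hv hv' (h₁.trans h₂.symm)
    obtain ⟨σ, rfl⟩ := exists_iso_eq_of_branches hG hFx hinj fun v hv =>
      ⟨w v hv, hw v hv, hFw hv, E v hv, fun a => (hF v hv a).symm⟩
    refine ⟨σ, hFx, fun a => ?_⟩
    by_cases ha : a = x
    · rw [ha, hFx, hx]
    · rw [hF _ (adj_branch hG ha) ⟨a, mem_desc_branch hG a⟩]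
      exact hEcol _ (adj_branch hG ha) ⟨a, mem_desc_branch hG a⟩

end RootedTree

structure IsChildIsoPartition {V : Type*} (G : SimpleGraph V) (x : V) {t : ℕ}
    (C : Fin t → Finset V) : Prop where
  adj : ∀ j, ∀ v ∈ C j, G.Adj x v
  existsUnique : ∀ v, G.Adj x v → ∃! j, v ∈ C j
  rootedIso : ∀ j, ∀ v ∈ C j, ∀ w ∈ C j, RootedIso (G.induce (desc G x v))
    (G.induce (desc G x w)) ⟨v, self_mem_desc G x v⟩ ⟨w, self_mem_desc G x w⟩
  not_rootedIso : ∀ j j', j ≠ j' → ∀ v ∈ C j, ∀ w ∈ C j', ¬ RootedIso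
    (G.induce (desc G x v)) (G.induce (desc G x w)) ⟨v, self_mem_desc G x v⟩
    ⟨w, self_mem_desc G x w⟩

namespace IsChildIsoPartition

variable {V : Type*} {G : SimpleGraph V} {x : V} {t k : ℕ} {C : Fin t → Finset V}
  {u : Fin t → V}

local notation "T[" v "]" => G.induce (desc G x v)
local notation "r[" v "]" => Subtype.mk (p := (· ∈ desc G x v)) v (self_mem_desc G x v)

theorem mem_of_rootedIso (hC : IsChildIsoPartition G x C) {j : Fin t} {v w : V} (hv : v ∈ C j)
    (hw : G.Adj x w) (h : RootedIso T[v] T[w] r[v] r[w]) : w ∈ C j := by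
  obtain ⟨j', hj', -⟩ := hC.existsUnique w hw
  obtain rfl : j = j' := by_contra fun hne => hC.not_rootedIso j j' hne v hv w hj' h
  exact hj'

theorem exists_extend (hG : G.IsTree) (hC : IsChildIsoPartition G x C) {α : Type*} (c : α)
    (g : ∀ j, ∀ v ∈ C j, desc G x v → α) :
    ∃ F : V → α, F x = c ∧ ∀ j v (hv : v ∈ C j) (a : desc G x v), F a = g j v hv a := by
  choose j hj using fun v (hv : G.Adj x v) => (hC.existsUnique v hv).exists
  obtain ⟨F, hFx, hF⟩ := exists_extend_branches hG c fun v hv => g (j v hv) v (hj v hv)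
  have hg {i i' : Fin t} (e : i = i') {v : V} (hv : v ∈ C i) (hv' : v ∈ C i') (a : desc G x v) :
      g i v hv a = g i' v hv' a := by
    subst e; rfl
  refine ⟨F, hFx, fun i v hv a => ?_⟩
  have hxv := hC.adj i v hv
  exact (hF v hxv a).trans (hg ((hC.existsUnique v hxv).unique (hj v hxv) hv) _ hv a)

def reprIso (hC : IsChildIsoPartition G x C) (hu : ∀ j, u j ∈ C j) {j : Fin t} {v : V}
    (hv : v ∈ C j) : T[u j] ≃g T[v] :=
  (hC.rootedIso j _ (hu j) v hv).choose

theorem reprIso_root (hC : IsChildIsoPartition G x C) (hu : ∀ j, u j ∈ C j) {j : Fin t} {v : V}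
    (hv : v ∈ C j) : hC.reprIso hu hv r[u j] = r[v] :=
  (hC.rootedIso j _ (hu j) v hv).choose_spec

theorem distinguishes_comp_reprIso (hG : G.IsTree) [Finite V] (hC : IsChildIsoPartition G x C)
    (hu : ∀ j, u j ∈ C j) {φ : V → Fin k} (hφ : Distinguishes G x φ) {j : Fin t} {v : V}
    (hv : v ∈ C j) : Distinguishes T[u j] r[u j] (φ ∘ (↑) ∘ hC.reprIso hu hv) :=
  .of_colEquiv (.of_iso _ (hC.reprIso_root hu hv) (φ ∘ (↑)))
    (((distinguishes_iff_subtrees hG).mp hφ).1 v (hC.adj j v hv))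

/-- Colourings of the subtrees in the class `C j` are compared on the representative `T[u j]`. -/
def childClass (hG : G.IsTree) [Finite V] (hC : IsChildIsoPartition G x C) (hu : ∀ j, u j ∈ C j)
    {φ : V → Fin k} (hφ : Distinguishes G x φ) (j : Fin t) (v : C j) :
    DistClasses T[u j] r[u j] k :=
  Quot.mk _ ⟨_, hC.distinguishes_comp_reprIso hG hu hφ v.2⟩

section

variable (hG : G.IsTree) [Finite V] (hC : IsChildIsoPartition G x C) (hu : ∀ j, u j ∈ C j)

theorem childClass_eq_childClass_iff {φ ψ : V → Fin k} (hφ : Distinguishes G x φ)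
    (hψ : Distinguishes G x ψ) {j : Fin t} {v w : C j} :
    hC.childClass hG hu hφ j v = hC.childClass hG hu hψ j w ↔
      ColEquiv T[v] T[w] r[v] r[w] (φ ∘ (↑)) (ψ ∘ (↑)) :=
  DistClasses.mk_eq_mk_iff.trans
    (colEquiv_comp_iso_iff (φ := φ ∘ Subtype.val) (ψ := ψ ∘ Subtype.val)
      _ (hC.reprIso_root hu v.2) _ (hC.reprIso_root hu w.2))

theorem childClass_injective {φ : V → Fin k} (hφ : Distinguishes G x φ) (j : Fin t) :
    Function.Injective (hC.childClass hG hu hφ j) := fun v w h =>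
  Subtype.ext <| ((distinguishes_iff_subtrees hG).mp hφ).2 v w (hC.adj j v v.2) (hC.adj j w w.2)
    ((hC.childClass_eq_childClass_iff hG hu hφ hφ).mp h)

def classSet {φ : V → Fin k} (hφ : Distinguishes G x φ) (j : Fin t) :
    Finset (DistClasses T[u j] r[u j] k) :=
  Finset.univ.map ⟨_, hC.childClass_injective hG hu hφ j⟩

theorem card_classSet {φ : V → Fin k} (hφ : Distinguishes G x φ) (j : Fin t) :
    (hC.classSet hG hu hφ j).card = (C j).card := by
  simp [classSet]

theorem mem_classSet {φ : V → Fin k} (hφ : Distinguishes G x φ) {j : Fin t}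
    {q : DistClasses T[u j] r[u j] k} :
    q ∈ hC.classSet hG hu hφ j ↔ ∃ v, hC.childClass hG hu hφ j v = q := by
  simp [classSet]

theorem classSet_eq_iff {φ ψ : V → Fin k} (hφ : Distinguishes G x φ)
    (hψ : Distinguishes G x ψ) :
    (∀ j, hC.classSet hG hu hφ j = hC.classSet hG hu hψ j) ↔ ∀ v, G.Adj x v →
      ∃ w, G.Adj x w ∧ ColEquiv T[v] T[w] r[v] r[w] (φ ∘ (↑)) (ψ ∘ (↑)) := by
  constructor
  · intro h v hv
    obtain ⟨j, hj, -⟩ := hC.existsUnique v hv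
    have hmem := (hC.mem_classSet hG hu hψ).mp
      (h j ▸ (hC.mem_classSet hG hu hφ).mpr ⟨⟨v, hj⟩, rfl⟩)
    obtain ⟨w, hw⟩ := hmem
    exact ⟨w, hC.adj j w w.2, ((hC.childClass_eq_childClass_iff hG hu hφ hψ).mp hw.symm)⟩
  · intro h j
    refine Finset.eq_of_subset_of_card_le (fun q hq => ?_)
      (by rw [card_classSet, card_classSet])
    obtain ⟨v, rfl⟩ := (hC.mem_classSet hG hu hφ).mp hq
    obtain ⟨w, hw, hvw⟩ := h v (hC.adj j v v.2)
    have hwj : w ∈ C j := hC.mem_of_rootedIso v.2 hw hvw.rootedIso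
    exact (hC.mem_classSet hG hu hψ).mpr ⟨⟨w, hwj⟩,
      ((hC.childClass_eq_childClass_iff hG hu hφ hψ (v := v) (w := ⟨w, hwj⟩)).mpr hvw).symm⟩

def classify (φ : {f : V → Fin k // Distinguishes G x f}) :
    Fin k × ∀ j, {s : Finset (DistClasses T[u j] r[u j] k) // s.card = (C j).card} :=
  (φ.1 x, fun j => ⟨hC.classSet hG hu φ.2 j, hC.card_classSet hG hu φ.2 j⟩)

theorem classify_eq_classify_iff {φ ψ : {f : V → Fin k // Distinguishes G x f}} :
    hC.classify hG hu φ = hC.classify hG hu ψ ↔ ColEquiv G G x x φ.1 ψ.1 := by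
  rw [colEquiv_iff_subtrees hG φ.2, ← hC.classSet_eq_iff hG hu φ.2 ψ.2]
  simp only [classify, Prod.mk.injEq, funext_iff, Subtype.mk.injEq]

theorem classify_surjective : Function.Surjective (hC.classify hG hu (k := k)) := by
  rintro ⟨c, s⟩
  have e (j : Fin t) : C j ≃ (s j).1 := Fintype.equivOfCardEq (by simp [(s j).2])
  let rep (j : Fin t) (v : C j) := Quot.out ((e j v).1 : DistClasses T[u j] r[u j] k)
  obtain ⟨Ψ, hΨx, hΨ⟩ := hC.exists_extend hG c fun j v hv a =>
    (rep j ⟨v, hv⟩).1 ((hC.reprIso hu hv).symm a)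
  have hΨρ (j : Fin t) (v : C j) : (Ψ ∘ Subtype.val) ∘ hC.reprIso hu v.2 = (rep j v).1 :=
    funext fun b => (hΨ j v v.2 _).trans (congrArg _ ((hC.reprIso hu v.2).symm_apply_apply b))
  have hΨdist : Distinguishes G x Ψ := by
    refine (distinguishes_iff_subtrees hG).mpr ⟨fun v hv => ?_, fun v w hv hw h => ?_⟩
    · obtain ⟨j, hj, -⟩ := hC.existsUnique v hv
      refine .of_colEquiv ?_ (rep j ⟨v, hj⟩).2
      exact hΨρ j ⟨v, hj⟩ ▸
        (ColEquiv.of_iso _ (hC.reprIso_root hu hj) (Ψ ∘ Subtype.val)).symm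
    · obtain ⟨j, hj, -⟩ := hC.existsUnique v hv
      have hwj := hC.mem_of_rootedIso hj hw h.rootedIso
      have := (colEquiv_comp_iso_iff _ (hC.reprIso_root hu hj) _ (hC.reprIso_root hu hwj)).mpr h
      rw [hΨρ j ⟨v, hj⟩, hΨρ j ⟨w, hwj⟩, ← DistClasses.mk_eq_mk_iff] at this
      simp only [rep, Quot.out_eq] at this
      exact congrArg Subtype.val ((e j).injective (Subtype.ext this))
  refine ⟨⟨Ψ, hΨdist⟩, Prod.ext hΨx (funext fun j => Subtype.ext ?_)⟩
  have hcls (v : C j) : hC.childClass hG hu hΨdist j v = (e j v).1 :=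
    (congrArg (Quot.mk _) (Subtype.ext (hΨρ j v))).trans (Quot.out_eq _)
  ext q
  refine (hC.mem_classSet hG hu hΨdist).trans ⟨?_, fun hq => ⟨(e j).symm ⟨q, hq⟩, ?_⟩⟩
  · rintro ⟨v, rfl⟩
    exact hcls v ▸ (e j v).2
  · rw [hcls, Equiv.apply_symm_apply]

end

theorem card_distClasses (hG : G.IsTree) [Finite V] (hC : IsChildIsoPartition G x C)
    (hu : ∀ j, u j ∈ C j) :
    Nat.card (DistClasses G x k) =
      k * ∏ j, (Nat.card (DistClasses T[u j] r[u j] k)).choose (C j).card := by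
  let f : DistClasses G x k → _ :=
    Quot.lift (hC.classify hG hu) fun _ _ h => (hC.classify_eq_classify_iff hG hu).mpr h
  have hf : Function.Bijective f := by
    refine ⟨?_, fun y => ?_⟩
    · rintro ⟨φ⟩ ⟨ψ⟩ h
      exact Quot.sound ((hC.classify_eq_classify_iff hG hu).mp h)
    · obtain ⟨φ, hφ⟩ := hC.classify_surjective hG hu y
      exact ⟨Quot.mk _ φ, hφ⟩
  rw [Nat.card_congr (Equiv.ofBijective f hf), Nat.card_prod, Nat.card_pi, Nat.card_fin]
  simp only [Nat.card_subtype_finset_card_eq]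

end IsChildIsoPartition

theorem stmt5 {V : Type*} [Fintype V] (G : SimpleGraph V) (hG : G.IsTree)
    (x : V) (k t : ℕ) (C : Fin t → Finset V) (u : Fin t → V)
    (hC1 : ∀ j, ∀ v ∈ C j, G.Adj x v)
    (hC2 : ∀ v : V, G.Adj x v → ∃! j, v ∈ C j)
    (hC3 : ∀ j, ∀ v ∈ C j, ∀ w ∈ C j,
      RootedIso (G.induce (desc G x v)) (G.induce (desc G x w))
        ⟨v, self_mem_desc G x v⟩ ⟨w, self_mem_desc G x w⟩)
    (hC4 : ∀ j j', j ≠ j' → ∀ v ∈ C j, ∀ w ∈ C j',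
      ¬ RootedIso (G.induce (desc G x v)) (G.induce (desc G x w))
          ⟨v, self_mem_desc G x v⟩ ⟨w, self_mem_desc G x w⟩)
    (hu : ∀ j, u j ∈ C j) :
    DCount G x k =
      k * ∏ j : Fin t,
        Nat.choose
          (DCount (G.induce (desc G x (u j))) ⟨u j, self_mem_desc G x (u j)⟩ k)
          (C j).card := by
  have hC : IsChildIsoPartition G x C := ⟨hC1, hC2, hC3, hC4⟩
  simp only [dCount_eq_card]
  exact hC.card_distClasses hG hu
end
end

section
/- Let T be a tree whose center is an edge uv, and let T' be the rooted tree obtained by subdividing uv and rooting at the new vertex. Then D(T) = D(T') and D_ℓ(T) = D_ℓ(T'). -/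
/-!
Automorphisms preserve eccentricity, so every automorphism of `G` maps the central edge `uv` to
itself and extends to an automorphism of the subdivision fixing the new vertex. Conversely, a
root-fixing automorphism of the subdivision permutes the old vertices and the neighbours `u, v`
of the root, hence restricts to an automorphism of `G`. So a coloring of the subdivision is
distinguishing iff its restriction to `G` is, while the root's color is arbitrary.
-/

open SimpleGraph

noncomputable section

lemma Sym2.mk_eq_mk_iff_mem {α : Type*} {x y u v : α} :
    s(x, y) = s(u, v) ↔ (x = u ∨ x = v) ∧ (y = u ∨ y = v) ∧ (x = y ↔ u = v) := by
  rw [Sym2.eq_iff]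
  constructor
  · rintro (⟨rfl, rfl⟩ | ⟨rfl, rfl⟩) <;> simp [eq_comm]
  · rintro ⟨rfl | rfl, rfl | rfl, h⟩ <;> simp_all

lemma Sym2.mk_apply_eq_mk_iff {α : Type*} {f : α → α} (hf : Function.Injective f) {u v : α}
    (hP : ∀ a, f a = u ∨ f a = v ↔ a = u ∨ a = v) (a b : α) :
    s(f a, f b) = s(u, v) ↔ s(a, b) = s(u, v) := by
  rw [Sym2.mk_eq_mk_iff_mem, Sym2.mk_eq_mk_iff_mem, hP, hP, hf.eq_iff]

lemma Equiv.exists_apply_inl_eq_inl {α : Type*} (σ : α ⊕ Unit ≃ α ⊕ Unit)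
    (hσ : σ (.inr ()) = .inr ()) : ∃ e : α ≃ α, ∀ a, σ (.inl a) = .inl (e a) := by
  have inl_of_inl : ∀ σ : α ⊕ Unit ≃ α ⊕ Unit, σ (.inr ()) = .inr () →
      ∀ a, ∃ b, σ (.inl a) = .inl b := by
    intro σ hσ a
    rcases h : σ (.inl a) with b | ⟨⟩
    · exact ⟨b, rfl⟩
    · exact absurd (σ.injective (h.trans hσ.symm)) Sum.inl_ne_inr
  choose f hf using inl_of_inl σ hσ
  choose g hg using inl_of_inl σ.symm (σ.symm_apply_eq.mpr hσ.symm)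
  refine ⟨⟨f, g, fun a => ?_, fun a => ?_⟩, hf⟩
  · simpa [← hf] using (hg (f a)).symm
  · simpa [← hg] using (hf (g a)).symm

namespace SimpleGraph

variable {V W : Type*}

lemma Iso.dist_apply_le {G : SimpleGraph V} {H : SimpleGraph W} (σ : G ≃g H) (a b : V) :
    H.dist (σ a) (σ b) ≤ G.dist a b := by
  by_cases h : G.Reachable a b
  · obtain ⟨p, hp⟩ := h.exists_walk_length_eq_dist
    calc H.dist (σ a) (σ b) ≤ (p.map σ.toHom).length := dist_le _
      _ = G.dist a b := by rw [Walk.length_map, hp]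
  · rw [dist_eq_zero_of_not_reachable h,
      dist_eq_zero_of_not_reachable (fun hr => h (by simpa using hr.map σ.symm.toHom))]

lemma Iso.dist_apply_s9 {G : SimpleGraph V} {H : SimpleGraph W} (σ : G ≃g H) (a b : V) :
    H.dist (σ a) (σ b) = G.dist a b :=
  (σ.dist_apply_le a b).antisymm (by simpa using σ.symm.dist_apply_le (σ a) (σ b))

lemma Iso.ecc_apply [Fintype V] {G : SimpleGraph V} (σ : G ≃g G) (a : V) :
    ecc G (σ a) = ecc G a := by
  rw [ecc, ← Finset.univ_map_equiv_to_embedding σ.toEquiv, Finset.sup_map]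
  simp [Function.comp_def, σ.dist_apply_s9, ecc]

lemma Iso.apply_mem_graphCenter_iff [Fintype V] {G : SimpleGraph V} (σ : G ≃g G) {a : V} :
    σ a ∈ graphCenter G ↔ a ∈ graphCenter G := by
  simp only [graphCenter, Set.mem_ofPred_eq, σ.ecc_apply]

section Subdivision

variable {G : SimpleGraph V} {u v : V}

@[simp]
lemma subdiv_adj_inl_inl {a b : V} :
    (subdiv G u v).Adj (.inl a) (.inl b) ↔ G.Adj a b ∧ s(a, b) ≠ s(u, v) := by
  simp only [subdiv, fromRel_adj, ne_eq, Sum.inl.injEq, Sym2.eq_iff]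
  constructor
  · rintro ⟨-, h | h⟩ <;> [exact ⟨h.1, by tauto⟩; exact ⟨h.1.symm, by tauto⟩]
  · exact fun h => ⟨h.1.ne, Or.inl ⟨h.1, by tauto⟩⟩

@[simp]
lemma subdiv_adj_inl_inr {a : V} {t : Unit} :
    (subdiv G u v).Adj (.inl a) (.inr t) ↔ a = u ∨ a = v := by
  simp [subdiv]

@[simp]
lemma subdiv_adj_inr_inl {a : V} {t : Unit} :
    (subdiv G u v).Adj (.inr t) (.inl a) ↔ a = u ∨ a = v := by
  rw [adj_comm, subdiv_adj_inl_inr]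

lemma adj_iff_subdiv_adj_or (hadj : G.Adj u v) {a b : V} :
    G.Adj a b ↔ (subdiv G u v).Adj (.inl a) (.inl b) ∨ s(a, b) = s(u, v) := by
  by_cases h : s(a, b) = s(u, v)
  · simpa [h, ← mem_edgeSet] using hadj
  · simp [h]

def Iso.subdivExtend (τ : G ≃g G) (hτ : ∀ a, τ a = u ∨ τ a = v ↔ a = u ∨ a = v) :
    subdiv G u v ≃g subdiv G u v where
  toEquiv := τ.toEquiv.sumCongr (Equiv.refl Unit)
  map_rel_iff' := by
    rintro (a | ⟨⟩) (b | ⟨⟩) <;>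
      simp [τ.map_adj_iff, hτ, Sym2.mk_apply_eq_mk_iff τ.injective hτ]

@[simp]
lemma Iso.subdivExtend_inl (τ : G ≃g G) (hτ) (a : V) :
    τ.subdivExtend (u := u) (v := v) hτ (.inl a) = .inl (τ a) := rfl

lemma exists_iso_subdiv_apply_inl (hadj : G.Adj u v) (σ : subdiv G u v ≃g subdiv G u v)
    (hσ : σ (.inr ()) = .inr ()) : ∃ τ : G ≃g G, ∀ a, σ (.inl a) = .inl (τ a) := by
  obtain ⟨e, he⟩ := σ.toEquiv.exists_apply_inl_eq_inl hσ
  have he' : ∀ a, σ (.inl a) = .inl (e a) := he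
  have hP : ∀ a, e a = u ∨ e a = v ↔ a = u ∨ a = v := fun a => by
    simpa [he', hσ] using σ.map_adj_iff (v := .inl a) (w := .inr ())
  refine ⟨⟨e, fun {a b} => ?_⟩, he'⟩
  rw [adj_iff_subdiv_adj_or hadj, adj_iff_subdiv_adj_or hadj, ← he', ← he', σ.map_adj_iff,
    Sym2.mk_apply_eq_mk_iff e.injective hP]

lemma Iso.apply_eq_or_apply_eq_iff_of_graphCenter_eq [Fintype V]
    (hc : graphCenter G = {u, v}) (τ : G ≃g G) (a : V) :
    τ a = u ∨ τ a = v ↔ a = u ∨ a = v := by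
  simpa [hc] using τ.apply_mem_graphCenter_iff (a := a)

lemma distinguishes_subdiv_sumElim (hadj : G.Adj u v) {α : Type*} {φ : V → α}
    (hφ : DistinguishesU G φ) (c : α) :
    Distinguishes (subdiv G u v) (.inr ()) (Sum.elim φ fun _ => c) := by
  intro σ hσr hσφ w
  obtain ⟨τ, hτ⟩ := exists_iso_subdiv_apply_inl hadj σ hσr
  have hτφ : ∀ a, φ (τ a) = φ a := fun a => by simpa [hτ] using hσφ (.inl a)
  rcases w with a | ⟨⟩
  · rw [hτ, hφ τ hτφ]
  · exact hσr

lemma distinguishesU_comp_inl_of_distinguishes_subdiv [Fintype V] (hc : graphCenter G = {u, v})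
    {α : Type*} {ψ : V ⊕ Unit → α} (hψ : Distinguishes (subdiv G u v) (.inr ()) ψ) :
    DistinguishesU G (ψ ∘ .inl) := by
  intro τ hτψ a
  have hP := τ.apply_eq_or_apply_eq_iff_of_graphCenter_eq hc
  have hext : ∀ w, ψ (τ.subdivExtend hP w) = ψ w := by
    rintro (b | ⟨⟩)
    · simpa using hτψ b
    · rfl
  simpa using hψ (τ.subdivExtend hP) rfl hext (.inl a)

lemma dNumU_eq_dNum_subdiv [Fintype V] (hadj : G.Adj u v) (hc : graphCenter G = {u, v}) :
    DNumU G = DNum (subdiv G u v) (.inr ()) := by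
  unfold DNumU DNum
  congr 1
  ext k
  constructor
  · rintro ⟨φ, hφ⟩
    exact ⟨Sum.elim φ fun _ => φ u, distinguishes_subdiv_sumElim hadj hφ _⟩
  · rintro ⟨ψ, hψ⟩
    exact ⟨ψ ∘ .inl, distinguishesU_comp_inl_of_distinguishes_subdiv hc hψ⟩

lemma dListNumU_eq_dListNum_subdiv [Fintype V] (hadj : G.Adj u v)
    (hc : graphCenter G = {u, v}) :
    DListNumU G = DListNum (subdiv G u v) (.inr ()) := by
  unfold DListNumU DListNum
  congr 1
  ext k
  constructor
  · intro h L hL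
    obtain ⟨φ, hφL, hφ⟩ := h (L ∘ .inl) (fun a => hL (.inl a))
    obtain ⟨c, hcL⟩ : (L (.inr ())).Nonempty := by
      rw [← Finset.card_pos, hL, ← hL (.inl u)]
      exact Finset.card_pos.mpr ⟨φ u, hφL u⟩
    refine ⟨Sum.elim φ fun _ => c, ?_, distinguishes_subdiv_sumElim hadj hφ c⟩
    rintro (a | ⟨⟩)
    exacts [hφL a, hcL]
  · intro h L hL
    obtain ⟨ψ, hψL, hψ⟩ := h (Sum.elim L fun _ => L u) (by rintro (a | ⟨⟩) <;> simp [hL])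
    exact ⟨ψ ∘ .inl, fun a => hψL (.inl a),
      distinguishesU_comp_inl_of_distinguishes_subdiv hc hψ⟩

end Subdivision

end SimpleGraph

theorem stmt9_general {V : Type*} [Fintype V] (G : SimpleGraph V)
    (u v : V) (hadj : G.Adj u v) (hc : graphCenter G = {u, v}) :
    DNumU G = DNum (subdiv G u v) (Sum.inr ()) ∧
    DListNumU G = DListNum (subdiv G u v) (Sum.inr ()) :=
  ⟨dNumU_eq_dNum_subdiv hadj hc, dListNumU_eq_dListNum_subdiv hadj hc⟩

theorem stmt9 {V : Type*} [Fintype V] (G : SimpleGraph V) (hG : G.IsTree)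
    (u v : V) (hadj : G.Adj u v) (hc : graphCenter G = {u, v}) :
    DNumU G = DNum (subdiv G u v) (Sum.inr ()) ∧
    DListNumU G = DListNum (subdiv G u v) (Sum.inr ()) :=
  stmt9_general G u v hadj hc
end
end

section
/- Let T be a tree whose center is an edge {u,v} and suppose T admits a proper 2-coloring that is distinguishing (i.e., χ_D(T) = 2). Then the automorphism group of T has order at most 2, and every nontrivial automorphism swaps u and v. -/
open SimpleGraph

noncomputable section

/-!
An automorphism preserves eccentricities, hence maps the central edge `{u, v}` to itself.
Since the tree is connected and the colouring is a proper 2-colouring, an automorphism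
either preserves every colour or swaps the two colours everywhere. Only the identity
preserves the colours, and `τ⁻¹ ∘ σ` preserves them whenever `σ` and `τ` both swap them,
so there is at most one nontrivial automorphism; it swaps colours, so it fixes neither
`u` nor `v` and must exchange them.
-/

namespace SimpleGraph.Iso

variable {V W : Type*} {G : SimpleGraph V} {H : SimpleGraph W}

lemma dist_map_le (φ : G ≃g H) (a b : V) : H.dist (φ a) (φ b) ≤ G.dist a b := by
  by_cases hr : G.Reachable a b
  · obtain ⟨p, hp⟩ := hr.exists_walk_length_eq_dist
    calc H.dist (φ a) (φ b) ≤ (p.map φ.toHom).length := dist_le _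
      _ = G.dist a b := by rw [Walk.length_map, hp]
  · rw [dist_eq_zero_of_not_reachable (Iso.reachable_iff.not.mpr hr)]
    exact Nat.zero_le _

lemma dist_map (φ : G ≃g H) (a b : V) : H.dist (φ a) (φ b) = G.dist a b := by
  refine le_antisymm (φ.dist_map_le a b) ?_
  simpa using φ.symm.dist_map_le (φ a) (φ b)

variable [Fintype V] [Fintype W]

lemma ecc_map (φ : G ≃g H) (x : V) : ecc H (φ x) = ecc G x := by
  unfold ecc
  rw [← Finset.map_univ_equiv φ.toEquiv, Finset.sup_map]
  exact Finset.sup_congr rfl fun y _ => φ.dist_map y x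

lemma map_mem_graphCenter (φ : G ≃g H) {x : V} (hx : x ∈ graphCenter G) :
    φ x ∈ graphCenter H := by
  intro w
  calc ecc H (φ x) = ecc G x := φ.ecc_map x
    _ ≤ ecc G (φ.symm w) := hx _
    _ = ecc H w := by simpa using φ.symm.ecc_map w

end SimpleGraph.Iso

section ProperTwoColoring

variable {V : Type*} {G : SimpleGraph V} {f : V → Fin 2}

lemma IsProper.apply_eq_iff_of_walk (hf : IsProper G f) (σ : G →g G) {a b : V}
    (p : G.Walk a b) : f (σ a) = f a ↔ f (σ b) = f b := by
  induction p with
  | nil => exact Iff.rfl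
  | cons h _ ih =>
    have := hf _ _ h
    have := hf _ _ (σ.map_adj h)
    exact Iff.trans (by omega) ih

lemma IsProper.preserves_or_swaps (hf : IsProper G f) (hG : G.Connected) (σ : G →g G) :
    (∀ w, f (σ w) = f w) ∨ ∀ w, f (σ w) ≠ f w := by
  by_contra! h
  obtain ⟨⟨a, ha⟩, ⟨b, hb⟩⟩ := h
  obtain ⟨p⟩ := hG.preconnected a b
  exact ha ((hf.apply_eq_iff_of_walk σ p).mpr hb)

lemma DistinguishesU.swaps_of_ne (hf : IsProper G f) (hfd : DistinguishesU G f)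
    (hG : G.Connected) {σ : G ≃g G} (hσ : ∃ w, σ w ≠ w) : ∀ w, f (σ w) ≠ f w := by
  obtain ⟨w, hw⟩ := hσ
  exact (hf.preserves_or_swaps hG σ.toHom).resolve_left fun h => hw (hfd σ h w)

lemma DistinguishesU.eq_of_swaps (hfd : DistinguishesU G f) {σ τ : G ≃g G}
    (hσ : ∀ w, f (σ w) ≠ f w) (hτ : ∀ w, f (τ w) ≠ f w) : σ = τ := by
  have hcol : ∀ w, f ((σ.trans τ.symm) w) = f w := fun w => by
    have h₁ := hσ w
    have h₂ := hτ (τ.symm (σ w))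
    rw [τ.apply_symm_apply] at h₂
    change f (τ.symm (σ w)) = f w
    omega
  ext w
  simpa using congrArg τ (hfd _ hcol w)

lemma DistinguishesU.card_iso_le_two (hf : IsProper G f) (hfd : DistinguishesU G f)
    (hG : G.Connected) : Nat.card (G ≃g G) ≤ 2 := by
  classical
  have hinj : Function.Injective fun σ : G ≃g G => decide (∀ w, f (σ w) = f w) := by
    intro σ τ hστ
    simp only [decide_eq_decide] at hστ
    by_cases hσ : ∀ w, f (σ w) = f w
    · ext w
      rw [hfd σ hσ w, hfd τ (hστ.mp hσ) w]
    · have hτ : ¬ ∀ w, f (τ w) = f w := hστ.not.mp hσ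
      exact hfd.eq_of_swaps ((hf.preserves_or_swaps hG σ.toHom).resolve_left hσ)
        ((hf.preserves_or_swaps hG τ.toHom).resolve_left hτ)
  simpa using Nat.card_le_card_of_injective _ hinj

end ProperTwoColoring

theorem stmt15_general {V : Type*} [Fintype V] (G : SimpleGraph V) (hG : G.IsTree)
    (u v : V) (hc : graphCenter G = {u, v})
    (f : V → Fin 2) (hfp : IsProper G f) (hfd : DistinguishesU G f) :
    Nat.card (G ≃g G) ≤ 2 ∧
    ∀ σ : G ≃g G, (∃ w, σ w ≠ w) → σ u = v ∧ σ v = u := by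
  have hconn := hG.connected
  refine ⟨hfd.card_iso_le_two hfp hconn, fun σ hσ => ?_⟩
  have hswap := hfd.swaps_of_ne hfp hconn hσ
  have hσu : σ u ∈ ({u, v} : Set V) := hc ▸ σ.map_mem_graphCenter (by simp [hc])
  have hσv : σ v ∈ ({u, v} : Set V) := hc ▸ σ.map_mem_graphCenter (by simp [hc])
  simp only [Set.mem_insert_iff, Set.mem_singleton_iff] at hσu hσv
  exact ⟨hσu.resolve_left fun h => hswap u (congrArg f h),
    hσv.resolve_right fun h => hswap v (congrArg f h)⟩

theorem stmt15 {V : Type*} [Fintype V] (G : SimpleGraph V) (hG : G.IsTree)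
    (u v : V) (hadj : G.Adj u v) (hc : graphCenter G = {u, v})
    (f : V → Fin 2) (hfp : IsProper G f) (hfd : DistinguishesU G f) :
    Nat.card (G ≃g G) ≤ 2 ∧
    ∀ σ : G ≃g G, (∃ w, σ w ≠ w) → σ u = v ∧ σ v = u :=
  stmt15_general G hG u v hc f hfp hfd
end
end

section
/- If T_x is a rooted tree, then χ_D(T_x) ≤ D(T_x) + 1: from any distinguishing k-coloring of T_x one can construct a proper distinguishing (k+1)-coloring of T_x. -/
open SimpleGraph

noncomputable section

/-!
Recolor a rooted tree top-down: a vertex keeps its color unless that color equals the new color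
of its parent, in which case it gets one fresh color. Every edge joins a vertex to its parent, so
the new coloring is proper. The old color of `v` is determined by the new colors of `v` and of its
parent, and root-fixing automorphisms commute with the parent map, so an automorphism fixing the
new coloring also fixes the old one.
-/

namespace SimpleGraph

variable {V W : Type*} {G : SimpleGraph V} {H : SimpleGraph W}

lemma Reachable.dist_map_le (f : G →g H) {u v : V} (h : G.Reachable u v) :
    H.dist (f u) (f v) ≤ G.dist u v := by
  obtain ⟨p, hp⟩ := h.exists_walk_length_eq_dist
  simpa [hp] using dist_le (p.map f)

lemma Iso.dist_eq (e : G ≃g H) (u v : V) : H.dist (e u) (e v) = G.dist u v := by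
  by_cases h : G.Reachable u v
  · refine le_antisymm (h.dist_map_le e.toHom) ?_
    simpa using (Iso.reachable_iff (φ := e) |>.mpr h).dist_map_le e.symm.toHom
  · rw [dist_eq_zero_of_not_reachable h,
      dist_eq_zero_of_not_reachable (mt Iso.reachable_iff.mp h)]

variable {r p q v : V}

lemma childOf_iso_iff (σ : G ≃g G) (hσ : σ r = r) :
    childOf G r (σ p) (σ v) ↔ childOf G r p v := by
  conv_lhs => rw [← hσ]
  simp only [childOf, σ.map_adj_iff, σ.dist_eq]

lemma IsTree.eq_of_childOf (hG : G.IsTree) (hp : childOf G r p v) (hq : childOf G r q v) :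
    p = q := by
  obtain ⟨P, -, hPl⟩ := hG.connected.exists_path_of_dist p r
  obtain ⟨Q, -, hQl⟩ := hG.connected.exists_path_of_dist q r
  have hP : (Walk.cons hp.1.symm P).IsPath := by
    apply Walk.isPath_of_length_eq_dist
    simp [hPl, hp.2]
  have hQ : (Walk.cons hq.1.symm Q).IsPath := by
    apply Walk.isPath_of_length_eq_dist
    simp [hQl, hq.2]
  have := hG.isAcyclic.subsingleton_path v r |>.elim ⟨_, hP⟩ ⟨_, hQ⟩
  injection congrArg Subtype.val this

lemma IsTree.childOf_or_childOf (hG : G.IsTree) (r : V) {a b : V} (hab : G.Adj a b) :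
    childOf G r a b ∨ childOf G r b a := by
  rcases hG.dist_eq_dist_add_one_of_adj r hab with h | h
  · exact .inr ⟨hab.symm, by simpa [dist_comm] using h⟩
  · exact .inl ⟨hab, by simpa [dist_comm] using h⟩

open Classical in
noncomputable def parent (G : SimpleGraph V) (r v : V) : V :=
  if h : ∃ p, childOf G r p v then h.choose else v

lemma childOf_parent (h : ∃ p, childOf G r p v) : childOf G r (G.parent r v) v := by
  rw [parent, dif_pos h]
  exact h.choose_spec

lemma parent_eq_self (h : ¬∃ p, childOf G r p v) : G.parent r v = v :=
  dif_neg h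

lemma IsTree.parent_eq_of_childOf (hG : G.IsTree) (h : childOf G r p v) : G.parent r v = p :=
  hG.eq_of_childOf (childOf_parent ⟨p, h⟩) h

lemma IsTree.parent_iso (hG : G.IsTree) (σ : G ≃g G) (hσ : σ r = r) (v : V) :
    G.parent r (σ v) = σ (G.parent r v) := by
  by_cases h : ∃ p, childOf G r p v
  · exact hG.parent_eq_of_childOf ((childOf_iso_iff σ hσ).mpr (childOf_parent h))
  · have hσv : ¬∃ p, childOf G r p (σ v) := fun ⟨p, hp⟩ =>
      h ⟨σ.symm p, (childOf_iso_iff σ hσ).mp (by simpa using hp)⟩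
    rw [parent_eq_self h, parent_eq_self hσv]

open Classical in
noncomputable def avoidParentColoring (G : SimpleGraph V) (r : V) {k : ℕ} (c : V → Fin k)
    (v : V) : Fin (k + 1) :=
  if h : ∃ p, childOf G r p v then
    have : G.dist (G.parent r v) r < G.dist v r := by
      have := (childOf_parent h).2
      omega
    if (c v).castSucc = avoidParentColoring G r c (G.parent r v) then Fin.last k
    else (c v).castSucc
  else (c v).castSucc
termination_by G.dist v r

variable {k : ℕ} (c : V → Fin k)

lemma avoidParentColoring_ne_parent (h : ∃ p, childOf G r p v) :
    avoidParentColoring G r c v ≠ avoidParentColoring G r c (G.parent r v) := by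
  rw [avoidParentColoring, dif_pos h]
  split_ifs with hclash
  · rw [← hclash]
    exact (Fin.castSucc_lt_last _).ne'
  · exact hclash

lemma castSucc_eq_avoidParentColoring (v : V) :
    (c v).castSucc = if avoidParentColoring G r c v = Fin.last k
      then avoidParentColoring G r c (G.parent r v) else avoidParentColoring G r c v := by
  rw [avoidParentColoring]
  split_ifs <;> simp_all [(Fin.castSucc_lt_last _).ne]

lemma IsTree.isProper_avoidParentColoring (hG : G.IsTree) (r : V) :
    IsProper G (avoidParentColoring G r c) := by
  intro a b hab
  rcases hG.childOf_or_childOf r hab with h | h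
  · rw [← hG.parent_eq_of_childOf h]
    exact (avoidParentColoring_ne_parent c ⟨a, h⟩).symm
  · rw [← hG.parent_eq_of_childOf h]
    exact avoidParentColoring_ne_parent c ⟨b, h⟩

lemma IsTree.distinguishes_avoidParentColoring (hG : G.IsTree) (hc : Distinguishes G r c) :
    Distinguishes G r (avoidParentColoring G r c) := by
  intro σ hσr hσ
  refine hc σ hσr fun v => Fin.castSucc_injective _ ?_
  rw [castSucc_eq_avoidParentColoring, castSucc_eq_avoidParentColoring (v := v),
    hG.parent_iso σ hσr, hσ, hσ]

end SimpleGraph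

lemma distinguishes_of_injective {V α : Type*} (G : SimpleGraph V) (r : V) {φ : V → α}
    (hφ : φ.Injective) : Distinguishes G r φ :=
  fun _ _ hσ w => hφ (hσ w)

lemma exists_distinguishes_fin_dNum {V : Type*} [Fintype V] (G : SimpleGraph V) (r : V) :
    ∃ c : V → Fin (DNum G r), Distinguishes G r c :=
  Nat.sInf_mem (s := {k | ∃ φ : V → Fin k, Distinguishes G r φ})
    ⟨_, _, distinguishes_of_injective G r (Fintype.equivFin V).injective⟩

theorem stmt17 {V : Type*} [Fintype V] (G : SimpleGraph V) (hG : G.IsTree)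
    (r : V) : chiD G r ≤ DNum G r + 1 := by
  obtain ⟨c, hc⟩ := exists_distinguishes_fin_dNum G r
  exact Nat.sInf_le ⟨avoidParentColoring G r c, hG.isProper_avoidParentColoring c r,
    hG.distinguishes_avoidParentColoring c hc⟩
end
end

section
/- Let T' be a rooted tree and suppose a distinguishing coloring φ of T' with k colors exists. Define φ' top-down: φ'(root) = φ(root); for a child u of v, set φ'(u) = * (a new (k+1)-st color) if φ'(v) = φ(u), and φ'(u) = φ(u) otherwise. Then φ' is a proper coloring of T', and any automorphism preserving φ' also preserves φ; hence φ' is a distinguishing proper (k+1)-coloring. -/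
open SimpleGraph

noncomputable section

namespace SimpleGraph

variable {V W : Type*} {G : SimpleGraph V} {H : SimpleGraph W}

lemma Hom.edist_map_le (f : G →g H) (a b : V) : H.edist (f a) (f b) ≤ G.edist a b := by
  by_cases hab : G.Reachable a b
  · obtain ⟨p, hp⟩ := hab.exists_walk_length_eq_edist
    simpa [hp] using H.edist_le (p.map f)
  · simp [edist_eq_top_of_not_reachable hab]

lemma Iso.edist_map (f : G ≃g H) (a b : V) : H.edist (f a) (f b) = G.edist a b :=
  le_antisymm (f.toHom.edist_map_le a b) (by simpa using f.symm.toHom.edist_map_le (f a) (f b))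

lemma Iso.dist_map_s19 (f : G ≃g H) (a b : V) : H.dist (f a) (f b) = G.dist a b := by
  simp only [dist, f.edist_map]

end SimpleGraph

section ChildOf

variable {V W : Type*} {G : SimpleGraph V} {r v u : V}

lemma childOf.map {H : SimpleGraph W} (f : G ≃g H) (h : childOf G r v u) :
    childOf H (f r) (f v) (f u) :=
  ⟨f.map_adj_iff.2 h.1, by rw [f.dist_map_s19, f.dist_map_s19, h.2]⟩

lemma exists_childOf_of_reachable (hur : G.Reachable u r) (hne : u ≠ r) :
    ∃ v, childOf G r v u := by
  obtain ⟨p, hp⟩ := hur.exists_walk_length_eq_dist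
  cases p with
  | nil => exact absurd rfl hne
  | @cons _ v _ huv q =>
    refine ⟨v, huv.symm, ?_⟩
    have hq : G.dist v r ≤ q.length := G.dist_le q
    have htri : G.dist u r ≤ G.dist u v + G.dist v r := huv.reachable.dist_triangle_left r
    rw [G.dist_eq_one_iff_adj.2 huv] at htri
    rw [Walk.length_cons] at hp
    omega

lemma childOf_or_childOf_of_adj (hG : G.IsTree) (r : V) {a b : V} (hab : G.Adj a b) :
    childOf G r a b ∨ childOf G r b a := by
  rcases hG.dist_eq_dist_add_one_of_adj r hab with h | h
  · exact Or.inr ⟨hab.symm, by rw [G.dist_comm, h, G.dist_comm]⟩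
  · exact Or.inl ⟨hab, by rw [G.dist_comm, h, G.dist_comm]⟩

end ChildOf

lemma ite_eq_ne_self {α : Type*} [DecidableEq α] {x y : α} (hxy : x ≠ y) (c : α) :
    (if c = x then y else x) ≠ c := by
  split_ifs with h
  · exact h ▸ hxy.symm
  · exact Ne.symm h

lemma ite_eq_injective {α β : Type*} [DecidableEq β] {f : α → β} (hf : Function.Injective f)
    {y : β} (hy : ∀ a, f a ≠ y) (c : β) :
    Function.Injective fun a => if c = f a then y else f a := by
  intro a b hab
  simp only at hab
  split_ifs at hab with ha hb hb
  · exact hf (ha.symm.trans hb)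
  · exact absurd hab.symm (hy b)
  · exact absurd hab (hy a)
  · exact hf hab

/-- The paper's `φ'`, with `Fin.last k` playing the new color `*`. -/
def IsTopDownRecoloring {V : Type*} (G : SimpleGraph V) (r : V) {k : ℕ} (φ : V → Fin k)
    (φ' : V → Fin (k + 1)) : Prop :=
  ∀ v u : V, childOf G r v u →
    φ' u = if φ' v = (φ u).castSucc then Fin.last k else (φ u).castSucc

namespace IsTopDownRecoloring

variable {V : Type*} {G : SimpleGraph V} {r : V} {k : ℕ} {φ : V → Fin k}
  {φ' : V → Fin (k + 1)}

lemma isProper (h : IsTopDownRecoloring G r φ φ') (hG : G.IsTree) : IsProper G φ' := by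
  intro a b hab
  rcases childOf_or_childOf_of_adj hG r hab with hba | hab'
  · rw [h a b hba]
    exact (ite_eq_ne_self (Fin.castSucc_ne_last _) _).symm
  · rw [h b a hab']
    exact ite_eq_ne_self (Fin.castSucc_ne_last _) _

/-- Knowing `φ'` at the parent, the color `φ u` can be read off `φ' u`; so an automorphism that
preserves `φ'` and maps parents to parents preserves `φ`. -/
lemma map_eq_of_map_eq (h : IsTopDownRecoloring G r φ φ') (hG : G.Connected) (σ : G ≃g G)
    (hσr : σ r = r) (hσ : ∀ w, φ' (σ w) = φ' w) (w : V) : φ (σ w) = φ w := by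
  rcases eq_or_ne w r with rfl | hw
  · rw [hσr]
  obtain ⟨v, hv⟩ := exists_childOf_of_reachable (hG w r) hw
  have hσv : childOf G r (σ v) (σ w) := hσr ▸ hv.map σ
  have hcolor := h _ _ hσv
  rw [hσ, hσ, h v w hv] at hcolor
  exact ite_eq_injective (Fin.castSucc_injective k) Fin.castSucc_ne_last (φ' v) hcolor.symm

end IsTopDownRecoloring

theorem stmt19_general {V : Type*} (G : SimpleGraph V) (hG : G.IsTree)
    (r : V) (k : ℕ) (φ : V → Fin k) (hφ : Distinguishes G r φ)
    (φ' : V → Fin (k + 1))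
    (hrec : ∀ v u : V, childOf G r v u →
      φ' u = if φ' v = (φ u).castSucc then Fin.last k else (φ u).castSucc) :
    IsProper G φ' ∧
    (∀ σ : G ≃g G, σ r = r → (∀ w, φ' (σ w) = φ' w) → ∀ w, φ (σ w) = φ w) ∧
    Distinguishes G r φ' := by
  have hrecolor : IsTopDownRecoloring G r φ φ' := hrec
  have hpreserve := hrecolor.map_eq_of_map_eq hG.connected
  exact ⟨hrecolor.isProper hG, hpreserve,
    fun σ hσr hσ => hφ σ hσr (hpreserve σ hσr hσ)⟩

theorem stmt19 {V : Type*} [Fintype V] (G : SimpleGraph V) (hG : G.IsTree)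
    (r : V) (k : ℕ) (φ : V → Fin k) (hφ : Distinguishes G r φ)
    (φ' : V → Fin (k + 1))
    (hroot : φ' r = (φ r).castSucc)
    (hrec : ∀ v u : V, childOf G r v u →
      φ' u = if φ' v = (φ u).castSucc then Fin.last k else (φ u).castSucc) :
    IsProper G φ' ∧
    (∀ σ : G ≃g G, σ r = r → (∀ w, φ' (σ w) = φ' w) → ∀ w, φ (σ w) = φ w) ∧
    Distinguishes G r φ' :=
  stmt19_general G hG r k φ hφ φ' hrec
end
end
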